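/- Fix m < -1 and for each n ∈ ℝ let V(·; n) : [0, ∞) → ℝ be the unique solution of V'' + 3V' = R(V), V(0) = m, V'(0) = n, and let β⁰ = {n : V'(t; n) > 0 and V(t; n) ≤ -1 for all t > 0}. Then β⁰ is a nonempty closed subset of ℝ, and for every n ∈ β⁰ one has the strict inequality V(t; n) < -1 for all t > 0. -/

import Mathlib

/-!
In the phase plane the equation is the first-order system `(V, V')' = (V', R V - 3 V')`.
Writing `v = G - exp G` with `G = Q v ≤ 0`, one has `R v = -2 (1 - exp G) ^ 2`; in this variable
`R` is increasing and `R - 4 id` is decreasing, so `R` is `4`-Lipschitz. Hence the system is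
Lipschitz: by Grönwall the trajectory depends continuously on `n`, and the equilibrium `(-1, 0)`
cannot be reached from `V 0 = m < -1`.

The complement of `β⁰` is the union of the parameters for which `V` exceeds `-1` at some time
and those for which `V'` becomes negative while `V` is still below `-1`. Both sets are open, and
they are disjoint: below `-1` we have `R < 0`, so `exp (3 t) * V'` decreases, and once `V' ≤ 0`
the solution keeps falling. A large `n` lies in the first set and `n = -1` in the second, so the
connectedness of `ℝ` forbids `β⁰ = ∅`. Finally, for `n ∈ β⁰` a time `t > 0` with `V t = -1`
would be a maximum, hence a visit to the equilibrium.
-/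

open Real Filter Set NNReal Topology

theorem lipschitzWith_of_monotone_of_antitone_sub {f : ℝ → ℝ} {K : ℝ≥0} (hf : Monotone f)
    (hfK : Antitone fun x => f x - K * x) : LipschitzWith K f := by
  refine LipschitzWith.of_le_add_mul K fun x y => ?_
  rcases le_total x y with hxy | hyx
  · exact le_add_of_le_of_nonneg (hf hxy) (by positivity)
  · have := hfK hyx
    rw [Real.dist_eq, abs_of_nonneg (sub_nonneg.2 hyx)]
    simp only at this
    linarith

theorem strictMonoOn_exp_mul {g g' : ℝ → ℝ} {D : Set ℝ} {k : ℝ} (hD : Convex ℝ D)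
    (hg : ∀ t ∈ D, HasDerivAt g (g' t) t) (h : ∀ t ∈ D, 0 < g' t + k * g t) :
    StrictMonoOn (fun t => exp (k * t) * g t) D := by
  have hφ (t : ℝ) (ht : t ∈ D) : HasDerivAt (fun t => exp (k * t) * g t)
      (exp (k * t) * (g' t + k * g t)) t := by
    refine (((hasDerivAt_id' t).const_mul k).exp.mul (hg t ht)).congr_deriv ?_
    ring
  refine strictMonoOn_of_deriv_pos hD
    (fun t ht => (hφ t ht).continuousAt.continuousWithinAt) fun t ht => ?_
  rw [(hφ t (interior_subset ht)).deriv]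
  exact mul_pos (exp_pos _) (h t (interior_subset ht))

theorem isOpen_setOf_forall_lt {X : Type*} [PseudoMetricSpace X] {f : X → ℝ → ℝ}
    {K : Set ℝ} {C : ℝ≥0} (hK : IsCompact K) (hcont : ∀ x, ContinuousOn (f x) K)
    (hlip : ∀ s ∈ K, LipschitzWith C fun x => f x s) (c : ℝ) :
    IsOpen {x | ∀ s ∈ K, f x s < c} := by
  refine Metric.isOpen_iff.2 fun x hx => ?_
  rcases K.eq_empty_or_nonempty with rfl | hne
  · exact ⟨1, one_pos, fun _ _ s hs => absurd hs (notMem_empty s)⟩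
  obtain ⟨s₀, hs₀, hmax⟩ := hK.exists_isMaxOn hne (hcont x)
  refine ⟨(c - f x s₀) / (C + 1), div_pos (sub_pos.2 (hx s₀ hs₀)) (by positivity),
    fun y hy s hs => ?_⟩
  rw [Metric.mem_ball, lt_div_iff₀ (by positivity)] at hy
  have h1 : f y s - f x s ≤ C * dist y x :=
    (le_abs_self _).trans (by simpa [Real.dist_eq] using (hlip s hs).dist_le_mul y x)
  have h2 : f x s ≤ f x s₀ := hmax hs
  nlinarith [dist_nonneg (x := y) (y := x)]

theorem strictMonoOn_sub_exp : StrictMonoOn (fun G : ℝ => G - exp G) (Iic 0) := by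
  refine strictMonoOn_of_deriv_pos (convex_Iic 0) (by fun_prop) fun G hG => ?_
  rw [interior_Iic] at hG
  have : HasDerivAt (fun G : ℝ => G - exp G) (1 - exp G) G :=
    (hasDerivAt_id G).sub (hasDerivAt_exp G)
  rw [this.deriv, sub_pos]
  exact exp_lt_one_iff.2 hG

-- `R v - 4 v` in the variable `G = Q v`
theorem antitone_sq_sub_exp :
    Antitone fun G : ℝ => -2 * (1 - exp G) ^ 2 - 4 * (G - exp G) := by
  have h (G : ℝ) : HasDerivAt (fun G : ℝ => -2 * (1 - exp G) ^ 2 - 4 * (G - exp G))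
      (-4 * (1 - exp G) ^ 2) G := by
    refine ((((hasDerivAt_exp G).const_sub 1).fun_pow 2 |>.const_mul (-2)).fun_sub
      (((hasDerivAt_id' G).fun_sub (hasDerivAt_exp G)).const_mul 4)).congr_deriv ?_
    push_cast
    ring
  refine antitone_of_deriv_nonpos (fun G => (h G).differentiableAt) fun G => ?_
  rw [(h G).deriv]
  nlinarith [sq_nonneg (1 - exp G)]

section Nonlinearity

variable {Q R : ℝ → ℝ}

theorem monotoneOn_Q (hQ : ∀ v : ℝ, v < -1 → Q v < 0 ∧ Q v - Real.exp (Q v) = v) :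
    MonotoneOn Q (Iio (-1)) := fun v hv w hw hvw => by
  rwa [← strictMonoOn_sub_exp.le_iff_le (hQ v hv).1.le (hQ w hw).1.le, (hQ v hv).2, (hQ w hw).2]

theorem R_neg_one_eq_zero
    (hR : ∀ v : ℝ, R v = if v < -1 then -2 * (1 - Real.exp (Q v)) ^ 2 else 4 * (v + 1)) :
    R (-1) = 0 := by
  simp [hR]

theorem R_neg (hQ : ∀ v : ℝ, v < -1 → Q v < 0 ∧ Q v - Real.exp (Q v) = v)
    (hR : ∀ v : ℝ, R v = if v < -1 then -2 * (1 - Real.exp (Q v)) ^ 2 else 4 * (v + 1))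
    {v : ℝ} (hv : v < -1) : R v < 0 := by
  have : exp (Q v) < 1 := exp_lt_one_iff.2 (hQ v hv).1
  rw [hR, if_pos hv]
  nlinarith

theorem neg_two_lt_R (hQ : ∀ v : ℝ, v < -1 → Q v < 0 ∧ Q v - Real.exp (Q v) = v)
    (hR : ∀ v : ℝ, R v = if v < -1 then -2 * (1 - Real.exp (Q v)) ^ 2 else 4 * (v + 1))
    (v : ℝ) : -2 < R v := by
  rw [hR]
  split_ifs with hv
  · have h1 : exp (Q v) < 1 := exp_lt_one_iff.2 (hQ v hv).1
    nlinarith [exp_pos (Q v)]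
  · linarith

theorem monotone_R (hQ : ∀ v : ℝ, v < -1 → Q v < 0 ∧ Q v - Real.exp (Q v) = v)
    (hR : ∀ v : ℝ, R v = if v < -1 then -2 * (1 - Real.exp (Q v)) ^ 2 else 4 * (v + 1)) :
    Monotone R := by
  intro v w hvw
  rcases lt_or_ge w (-1) with hw | hw
  · have hv := hvw.trans_lt hw
    have hQvw : exp (Q v) ≤ exp (Q w) := exp_le_exp.2 (monotoneOn_Q hQ hv hw hvw)
    have hQw : exp (Q w) ≤ 1 := exp_le_one_iff.2 (hQ w hw).1.le
    rw [hR v, hR w, if_pos hv, if_pos hw]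
    nlinarith
  · rw [hR w, if_neg hw.not_gt]
    rcases lt_or_ge v (-1) with hv | hv
    · linarith [R_neg hQ hR hv]
    · rw [hR v, if_neg hv.not_gt]
      linarith

theorem antitone_R_sub (hQ : ∀ v : ℝ, v < -1 → Q v < 0 ∧ Q v - Real.exp (Q v) = v)
    (hR : ∀ v : ℝ, R v = if v < -1 then -2 * (1 - Real.exp (Q v)) ^ 2 else 4 * (v + 1)) :
    Antitone fun v => R v - 4 * v := by
  have hG {v : ℝ} (hv : v < -1) :
      R v - 4 * v = -2 * (1 - exp (Q v)) ^ 2 - 4 * (Q v - exp (Q v)) := by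
    rw [hR, if_pos hv, (hQ v hv).2]
  have hlin {v : ℝ} (hv : -1 ≤ v) : R v - 4 * v = 4 := by
    rw [hR, if_neg hv.not_gt]
    ring
  intro v w hvw
  rcases lt_or_ge w (-1) with hw | hw
  · have hv := hvw.trans_lt hw
    simp only [hG hv, hG hw]
    exact antitone_sq_sub_exp (monotoneOn_Q hQ hv hw hvw)
  · simp only [hlin hw]
    rcases lt_or_ge v (-1) with hv | hv
    · simpa [hG hv] using antitone_sq_sub_exp (hQ v hv).1.le
    · rw [hlin hv]

theorem lipschitzWith_R (hQ : ∀ v : ℝ, v < -1 → Q v < 0 ∧ Q v - Real.exp (Q v) = v)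
    (hR : ∀ v : ℝ, R v = if v < -1 then -2 * (1 - Real.exp (Q v)) ^ 2 else 4 * (v + 1)) :
    LipschitzWith 4 R :=
  lipschitzWith_of_monotone_of_antitone_sub (monotone_R hQ hR)
    (by exact_mod_cast antitone_R_sub hQ hR)

end Nonlinearity

def phaseField (R : ℝ → ℝ) (p : ℝ × ℝ) : ℝ × ℝ := (p.2, R p.1 - 3 * p.2)

noncomputable def trajectory (V : ℝ → ℝ) (t : ℝ) : ℝ × ℝ := (V t, deriv V t)

def IsSolution (R V : ℝ → ℝ) : Prop :=
  ∀ t, 0 ≤ t → DifferentiableAt ℝ V t ∧ DifferentiableAt ℝ (deriv V) t ∧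
    deriv (deriv V) t + 3 * deriv V t = R (V t)

theorem lipschitzWith_phaseField {R : ℝ → ℝ} {K : ℝ≥0} (hR : LipschitzWith K R) :
    LipschitzWith (K + 3) (phaseField R) := by
  refine LipschitzWith.of_dist_le_mul fun p q => ?_
  have h1 : |p.1 - q.1| ≤ dist p q := by rw [← Real.dist_eq]; exact le_max_left _ _
  have h2 : |p.2 - q.2| ≤ dist p q := by rw [← Real.dist_eq]; exact le_max_right _ _
  have hRpq : |R p.1 - R q.1| ≤ K * |p.1 - q.1| := by
    simpa only [Real.dist_eq] using hR.dist_le_mul p.1 q.1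
  have hK := K.coe_nonneg
  rw [Prod.dist_eq, Real.dist_eq, Real.dist_eq, NNReal.coe_add, NNReal.coe_ofNat]
  simp only [phaseField]
  refine max_le (by nlinarith [abs_nonneg (p.2 - q.2)]) ?_
  calc |R p.1 - 3 * p.2 - (R q.1 - 3 * q.2)| = |(R p.1 - R q.1) - 3 * (p.2 - q.2)| := by
        ring_nf
    _ ≤ |R p.1 - R q.1| + |3 * (p.2 - q.2)| := abs_sub _ _
    _ ≤ (K + 3) * dist p q := by
        rw [abs_mul, abs_of_pos (by norm_num : (0 : ℝ) < 3)]; nlinarith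

namespace IsSolution

variable {R V W : ℝ → ℝ} {K : ℝ≥0} {t : ℝ}

theorem hasDerivAt (hV : IsSolution R V) (ht : 0 ≤ t) : HasDerivAt V (deriv V t) t :=
  (hV t ht).1.hasDerivAt

theorem hasDerivAt_deriv (hV : IsSolution R V) (ht : 0 ≤ t) :
    HasDerivAt (deriv V) (R (V t) - 3 * deriv V t) t := by
  rw [← (hV t ht).2.2, add_sub_cancel_right]
  exact (hV t ht).2.1.hasDerivAt

theorem continuousOn (hV : IsSolution R V) : ContinuousOn V (Ici 0) :=
  fun _ hs => (hV.hasDerivAt hs).continuousAt.continuousWithinAt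

theorem hasDerivAt_trajectory (hV : IsSolution R V) (ht : 0 ≤ t) :
    HasDerivAt (trajectory V) (phaseField R (trajectory V t)) t :=
  (hV.hasDerivAt ht).prodMk (hV.hasDerivAt_deriv ht)

theorem continuousOn_trajectory (hV : IsSolution R V) : ContinuousOn (trajectory V) (Ici 0) :=
  fun _ hs => (hV.hasDerivAt_trajectory hs).continuousAt.continuousWithinAt

theorem dist_trajectory_le (hR : LipschitzWith K R) (hV : IsSolution R V) (hW : IsSolution R W)
    (ht : 0 ≤ t) : dist (trajectory V t) (trajectory W t) ≤
      dist (trajectory V 0) (trajectory W 0) * exp ((K + 3) * t) := by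
  have hsol {U : ℝ → ℝ} (hU : IsSolution R U) :
      ∀ s ∈ Ico 0 t,
        HasDerivWithinAt (trajectory U) (phaseField R (trajectory U s)) (Ici s) s :=
    fun s hs => (hU.hasDerivAt_trajectory hs.1).hasDerivWithinAt
  simpa using dist_le_of_trajectories_ODE (v := fun _ => phaseField R)
    (fun _ => lipschitzWith_phaseField hR) (hV.continuousOn_trajectory.mono Icc_subset_Ici_self)
    (hsol hV) (hW.continuousOn_trajectory.mono Icc_subset_Ici_self) (hsol hW) le_rfl t
    ⟨ht, le_rfl⟩

theorem trajectory_zero_eq_of_equilibrium {p : ℝ × ℝ} (hR : LipschitzWith K R)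
    (hp : phaseField R p = 0) (hV : IsSolution R V) (ht : 0 ≤ t) (hVt : trajectory V t = p) :
    trajectory V 0 = p := by
  refine ODE_solution_unique_of_mem_Icc_left (v := fun _ => phaseField R) (s := fun _ => univ)
    (fun _ _ => (lipschitzWith_phaseField hR).lipschitzOnWith)
    (hV.continuousOn_trajectory.mono Icc_subset_Ici_self)
    (fun s hs => (hV.hasDerivAt_trajectory hs.1.le).hasDerivWithinAt) (fun _ _ => trivial)
    continuousOn_const (fun _ _ => by rw [hp]; exact hasDerivWithinAt_const _ _ _)
    (fun _ _ => trivial) hVt ⟨le_rfl, ht⟩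

theorem lt_of_forall_pos_le {a : ℝ} (hR : LipschitzWith K R) (ha : R a = 0) (hV : IsSolution R V)
    (h0 : V 0 < a) (hle : ∀ t > 0, V t ≤ a) : ∀ t ≥ 0, V t < a := by
  intro t ht
  rcases ht.eq_or_lt with rfl | ht
  · exact h0
  refine (hle t ht).lt_of_ne fun hVt => h0.ne ?_
  have hmax : IsLocalMax V t :=
    Filter.mem_of_superset (Ioi_mem_nhds ht) fun s hs => hVt ▸ hle s hs
  have hp : phaseField R (a, 0) = 0 := by simp [phaseField, ha]
  have := hV.trajectory_zero_eq_of_equilibrium hR hp ht.le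
    (Prod.ext hVt hmax.deriv_eq_zero)
  exact congrArg Prod.fst this

theorem deriv_neg_of_lt {a t₁ T : ℝ} (hRneg : ∀ v < a, R v < 0) (hV : IsSolution R V)
    (ht₁ : 0 ≤ t₁) (hd : deriv V t₁ ≤ 0) (hlt : ∀ s ∈ Ico t₁ T, V s < a) :
    ∀ s ∈ Ioo t₁ T, deriv V s < 0 := by
  have hmono : StrictMonoOn (fun s => exp (3 * s) * -deriv V s) (Ico t₁ T) :=
    strictMonoOn_exp_mul (convex_Ico t₁ T)
      (fun s hs => (hV.hasDerivAt_deriv (ht₁.trans hs.1)).neg)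
      fun s hs => by linarith [hRneg _ (hlt s hs)]
  intro s hs
  have := hmono ⟨le_rfl, hs.1.trans hs.2⟩ ⟨hs.1.le, hs.2⟩ hs.1
  have : 0 < exp (3 * s) * -deriv V s := lt_of_le_of_lt (by nlinarith [exp_pos (3 * t₁)]) this
  linarith [pos_of_mul_pos_right this (exp_pos _).le]

theorem lt_of_deriv_nonpos {a t₁ : ℝ} (hRneg : ∀ v < a, R v < 0) (hV : IsSolution R V)
    (ht₁ : 0 ≤ t₁) (hd : deriv V t₁ ≤ 0) (hv : V t₁ < a) : ∀ t ≥ t₁, V t < a := by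
  by_contra! ⟨t, htt₁, hat⟩
  set S := Ici t₁ ∩ V ⁻¹' Ici a
  have hSc : IsClosed S := (hV.continuousOn.mono (Ici_subset_Ici.2 ht₁))
    |>.preimage_isClosed_of_isClosed isClosed_Ici isClosed_Ici
  have hSb : BddBelow S := ⟨t₁, fun s hs => hs.1⟩
  set T := sInf S
  have hT : T ∈ S := hSc.csInf_mem ⟨t, htt₁, hat⟩ hSb
  have hbefore : ∀ s ∈ Ico t₁ T, V s < a := fun s hs =>
    not_le.1 fun h => notMem_of_lt_csInf hs.2 hSb ⟨hs.1, h⟩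
  have ht₁T : t₁ < T := hT.1.lt_of_ne (by rintro h; exact hv.not_ge (h ▸ hT.2))
  have hneg := hV.deriv_neg_of_lt hRneg ht₁ hd hbefore
  have hanti : AntitoneOn V (Icc t₁ T) := by
    refine antitoneOn_of_deriv_nonpos (convex_Icc _ _)
      (hV.continuousOn.mono fun s hs => ht₁.trans hs.1)
      (fun s hs => (hV.hasDerivAt (ht₁.trans (interior_subset hs).1))
        |>.differentiableAt.differentiableWithinAt)
      fun s hs => (hneg s (by rwa [interior_Icc] at hs)).le
  exact (hanti ⟨le_rfl, ht₁T.le⟩ ⟨ht₁T.le, le_rfl⟩ ht₁T.le |>.trans_lt hv).not_ge hT.2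

theorem le_apply_one {b : ℝ} (hR : ∀ v, -b < R v) (hV : IsSolution R V)
    (h0 : 0 ≤ deriv V 0 + b / 3) :
    V 0 + (deriv V 0 + b / 3) * exp (-3) - b / 3 ≤ V 1 := by
  have hmono : MonotoneOn (fun t => exp (3 * t) * (deriv V t + b / 3)) (Ici 0) :=
    (strictMonoOn_exp_mul (convex_Ici 0) (fun t ht => (hV.hasDerivAt_deriv ht).add_const (b / 3))
      fun t _ => by linarith [hR (V t)]).monotoneOn
  have hderiv : ∀ t ∈ interior (Icc (0 : ℝ) 1),
      (deriv V 0 + b / 3) * exp (-3) - b / 3 ≤ deriv V t := by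
    intro t ht
    rw [interior_Icc] at ht
    have h1 := hmono self_mem_Ici ht.1.le ht.1.le
    have h2 : exp (-3) * exp (3 * t) ≤ 1 := by
      rw [← exp_add, exp_le_one_iff]; linarith [ht.2]
    simp only [mul_zero, exp_zero, one_mul] at h1
    nlinarith [exp_pos (-3), exp_pos (3 * t)]
  have := (convex_Icc (0 : ℝ) 1).mul_sub_le_image_sub_of_le_deriv
    (hV.continuousOn.mono Icc_subset_Ici_self)
    (fun t ht => (hV.hasDerivAt (interior_subset ht).1).differentiableAt.differentiableWithinAt)
    hderiv 0 ⟨le_rfl, zero_le_one⟩ 1 ⟨zero_le_one, le_rfl⟩ zero_le_one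
  linarith

theorem exists_deriv_neg_forall_lt {a : ℝ} (hV : IsSolution R V) (h0 : V 0 < a)
    (hd : deriv V 0 < 0) : ∃ t > 0, deriv V t < 0 ∧ ∀ s ∈ Icc 0 t, V s < a := by
  have hev : ∀ᶠ s in 𝓝[≥] 0, deriv V s < 0 ∧ V s < a :=
    (((hV.hasDerivAt_deriv le_rfl).continuousAt.eventually (gt_mem_nhds hd)).and
      ((hV.hasDerivAt le_rfl).continuousAt.eventually (gt_mem_nhds h0))).filter_mono
      nhdsWithin_le_nhds
  obtain ⟨u, hu, hsub⟩ := mem_nhdsGE_iff_exists_Icc_subset.1 hev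
  exact ⟨u, hu, (hsub ⟨le_of_lt hu, le_rfl⟩).1, fun s hs => (hsub hs).2⟩

end IsSolution

def shootingSet (V : ℝ → ℝ → ℝ) : Set ℝ :=
  {n | ∀ t > 0, 0 < deriv (V n) t ∧ V n t ≤ -1}

def overshootSet (V : ℝ → ℝ → ℝ) : Set ℝ :=
  {n | ∃ t > 0, -1 < V n t}

def undershootSet (V : ℝ → ℝ → ℝ) : Set ℝ :=
  {n | ∃ t > 0, deriv (V n) t < 0 ∧ ∀ s ∈ Icc 0 t, V n s < -1}

section ShootingFamily

variable {R : ℝ → ℝ} {V : ℝ → ℝ → ℝ} {K : ℝ≥0} {m : ℝ}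

theorem lipschitzWith_trajectory (hR : LipschitzWith K R) (hV : ∀ n, IsSolution R (V n))
    (hic : ∀ n, V n 0 = m ∧ deriv (V n) 0 = n) {s T : ℝ} (hs : s ∈ Icc 0 T) :
    LipschitzWith (exp ((K + 3) * T)).toNNReal fun n => trajectory (V n) s := by
  refine LipschitzWith.of_dist_le' fun n n' => ?_
  have h0 : dist (trajectory (V n) 0) (trajectory (V n') 0) = dist n n' := by
    simp [trajectory, Prod.dist_eq, (hic n).1, (hic n).2, (hic n').1, (hic n').2]
  calc dist (trajectory (V n) s) (trajectory (V n') s) ≤ dist n n' * exp ((K + 3) * s) :=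
        h0 ▸ (hV n).dist_trajectory_le hR (hV n') hs.1
    _ ≤ exp ((K + 3) * T) * dist n n' := by
        rw [mul_comm]; gcongr; exact hs.2

theorem lipschitzWith_apply (hR : LipschitzWith K R) (hV : ∀ n, IsSolution R (V n))
    (hic : ∀ n, V n 0 = m ∧ deriv (V n) 0 = n) {s T : ℝ} (hs : s ∈ Icc 0 T) :
    LipschitzWith (exp ((K + 3) * T)).toNNReal fun n => V n s := by
  have := LipschitzWith.prod_fst.comp (lipschitzWith_trajectory hR hV hic hs)
  rwa [one_mul] at this

theorem isOpen_overshootSet (hR : LipschitzWith K R) (hV : ∀ n, IsSolution R (V n))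
    (hic : ∀ n, V n 0 = m ∧ deriv (V n) 0 = n) : IsOpen (overshootSet V) := by
  refine isOpen_iff_mem_nhds.2 ?_
  rintro n ⟨t, ht, hVt⟩
  have hc := (lipschitzWith_apply hR hV hic ⟨ht.le, le_rfl⟩).continuous
  filter_upwards [hc.continuousAt.eventually (lt_mem_nhds hVt)] with n' hn' using ⟨t, ht, hn'⟩

theorem isOpen_undershootSet (hR : LipschitzWith K R) (hV : ∀ n, IsSolution R (V n))
    (hic : ∀ n, V n 0 = m ∧ deriv (V n) 0 = n) : IsOpen (undershootSet V) := by
  refine isOpen_iff_mem_nhds.2 ?_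
  rintro n ⟨t, ht, hd, hlt⟩
  have hc : Continuous fun n => deriv (V n) t := (LipschitzWith.prod_snd.comp
    (lipschitzWith_trajectory hR hV hic ⟨ht.le, le_rfl⟩)).continuous
  have hopen := isOpen_setOf_forall_lt (isCompact_Icc (a := 0) (b := t))
    (fun n => (hV n).continuousOn.mono Icc_subset_Ici_self)
    (fun s hs => lipschitzWith_apply hR hV hic hs) (-1)
  filter_upwards [hc.continuousAt.eventually (gt_mem_nhds hd), hopen.mem_nhds hlt]
    with n' hd' hlt' using ⟨t, ht, hd', hlt'⟩

theorem lt_of_mem_undershootSet (hRneg : ∀ v < -1, R v < 0) (hV : ∀ n, IsSolution R (V n))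
    {n : ℝ} (hn : n ∈ undershootSet V) : ∀ t ≥ 0, V n t < -1 := by
  obtain ⟨t₁, ht₁, hd, hlt⟩ := hn
  intro t ht
  rcases le_total t t₁ with htt₁ | ht₁t
  · exact hlt t ⟨ht, htt₁⟩
  · exact (hV n).lt_of_deriv_nonpos hRneg ht₁.le hd.le (hlt t₁ ⟨ht₁.le, le_rfl⟩) t ht₁t

theorem disjoint_overshootSet_undershootSet (hRneg : ∀ v < -1, R v < 0)
    (hV : ∀ n, IsSolution R (V n)) : Disjoint (overshootSet V) (undershootSet V) :=
  Set.disjoint_left.2 fun _ ⟨t, ht, hVt⟩ hn =>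
    (lt_of_mem_undershootSet hRneg hV hn t ht.le).not_gt hVt

theorem compl_shootingSet (hR : LipschitzWith K R) (hR₀ : R (-1) = 0)
    (hRneg : ∀ v < -1, R v < 0) (hV : ∀ n, IsSolution R (V n))
    (hic : ∀ n, V n 0 = m ∧ deriv (V n) 0 = n) (hm : m < -1) :
    (shootingSet V)ᶜ = overshootSet V ∪ undershootSet V := by
  ext n
  constructor
  · intro hn
    by_cases hover : n ∈ overshootSet V
    · exact Or.inl hover
    have hle : ∀ t > 0, V n t ≤ -1 := fun t ht => not_lt.1 fun h => hover ⟨t, ht, h⟩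
    have hlt := (hV n).lt_of_forall_pos_le hR hR₀ ((hic n).1 ▸ hm) hle
    obtain ⟨t₀, ht₀, hd⟩ : ∃ t₀ > 0, deriv (V n) t₀ ≤ 0 := by
      by_contra! h
      exact hn fun t ht => ⟨h t ht, hle t ht⟩
    have hneg := (hV n).deriv_neg_of_lt hRneg ht₀.le hd (T := t₀ + 2)
      fun s hs => hlt s (ht₀.le.trans hs.1)
    exact Or.inr ⟨t₀ + 1, by linarith, hneg _ ⟨by linarith, by linarith⟩,
      fun s hs => hlt s hs.1⟩
  · rintro (⟨t, ht, hVt⟩ | ⟨t, ht, hd, -⟩) hn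
    · exact (hn t ht).2.not_gt hVt
    · exact (hn t ht).1.not_gt hd

theorem overshootSet_nonempty (hRb : ∀ v, -2 < R v) (hV : ∀ n, IsSolution R (V n))
    (hic : ∀ n, V n 0 = m ∧ deriv (V n) 0 = n) (hm : m < -1) : (overshootSet V).Nonempty := by
  -- chosen so that `le_apply_one` gives `-2 / 3 ≤ V n 1`
  set n := -m * exp 3 - 2 / 3
  have hn : deriv (V n) 0 + 2 / 3 = -m * exp 3 := by rw [(hic n).2]; ring
  have h1 := (hV n).le_apply_one hRb (by rw [hn]; nlinarith [exp_pos 3])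
  rw [hn, (hic n).1, mul_assoc, ← exp_add] at h1
  norm_num at h1
  exact ⟨n, 1, one_pos, by linarith⟩

theorem undershootSet_nonempty (hV : ∀ n, IsSolution R (V n))
    (hic : ∀ n, V n 0 = m ∧ deriv (V n) 0 = n) (hm : m < -1) : (undershootSet V).Nonempty :=
  ⟨-1, (hV (-1)).exists_deriv_neg_forall_lt ((hic _).1 ▸ hm) ((hic _).2 ▸ neg_one_lt_zero)⟩

end ShootingFamily

/-- For fixed `m < -1` and the shooting family `V(·; n)` solving
`V'' + 3V' = R(V)`, `V(0) = m`, `V'(0) = n`, the set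
`β⁰ = {n : ∀ t > 0, V'(t;n) > 0 ∧ V(t;n) ≤ -1}` is a nonempty closed subset
of `ℝ`, and for every `n ∈ β⁰` one has the strict inequality
`V(t; n) < -1` for all `t > 0`. -/
theorem shooting_set_zero_closed_nonempty
    (Q R : ℝ → ℝ)
    (hQ : ∀ v : ℝ, v < -1 → Q v < 0 ∧ Q v - Real.exp (Q v) = v)
    (hR : ∀ v : ℝ, R v = if v < -1 then -2 * (1 - Real.exp (Q v)) ^ 2 else 4 * (v + 1))
    (m : ℝ) (hm : m < -1)
    (V : ℝ → ℝ → ℝ)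
    (hdiff : ∀ n : ℝ, ∀ t : ℝ, 0 ≤ t →
      DifferentiableAt ℝ (V n) t ∧ DifferentiableAt ℝ (deriv (V n)) t)
    (hode : ∀ n : ℝ, ∀ t : ℝ, 0 ≤ t →
      deriv (deriv (V n)) t + 3 * deriv (V n) t = R (V n t))
    (hic : ∀ n : ℝ, V n 0 = m ∧ deriv (V n) 0 = n)
    (B0 : Set ℝ)
    (hB0 : B0 = {n : ℝ | ∀ t > 0, 0 < deriv (V n) t ∧ V n t ≤ -1}) :
    IsClosed B0 ∧ B0.Nonempty ∧ ∀ n ∈ B0, ∀ t > 0, V n t < -1 := by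
  have hV : ∀ n, IsSolution R (V n) := fun n t ht =>
    ⟨(hdiff n t ht).1, (hdiff n t ht).2, hode n t ht⟩
  have hRlip := lipschitzWith_R hQ hR
  have hRneg : ∀ v < -1, R v < 0 := fun v hv => R_neg hQ hR hv
  have hcompl := compl_shootingSet hRlip (R_neg_one_eq_zero hR) hRneg hV hic hm
  have hover := isOpen_overshootSet hRlip hV hic
  have hunder := isOpen_undershootSet hRlip hV hic
  change B0 = shootingSet V at hB0
  subst hB0
  refine ⟨?_, ?_, fun n hn t ht => ?_⟩
  · rw [← isOpen_compl_iff, hcompl]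
    exact hover.union hunder
  · by_contra hempty
    rw [not_nonempty_iff_eq_empty, ← compl_univ_iff, hcompl] at hempty
    have hboth := nonempty_inter hover hunder hempty
      (overshootSet_nonempty (neg_two_lt_R hQ hR) hV hic hm) (undershootSet_nonempty hV hic hm)
    exact hboth.not_disjoint (disjoint_overshootSet_undershootSet hRneg hV)
  · exact (hV n).lt_of_forall_pos_le hRlip (R_neg_one_eq_zero hR) ((hic n).1 ▸ hm)
      (fun t ht => (hn t ht).2) t ht.le
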